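/- arXiv:1102.3503 — 2 statements merged into one kernel-verified Lean document; each statement's English description precedes it below -/
import Mathlib

section
/- For words w₁, w₂ of length ≥ 2k with D_{m,k}(w₁) = D_{m,k}(w₂), there exists a regular language R ⊆ V* such that rHI*_{m,k}(w₁) = w₁R and rHI*_{m,k}(w₂) = w₂R. -/
/-!
The words of `rHI*_{m,k}(w)` are the `w ++ s` where `s` is built from `[]` by appending chunks
`γ̄^R` such that `γ` is a pivot of `w ++ s` (`w ++ s = δγαβᾱ^R`, `|α| = k`, `|γ| ≤ m`). Since
`ᾱ^R` is the suffix of length `k`, `γ` is a pivot of `v` iff `γα` followed by some `k` letters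
occurs in `v`; so this only depends on the last `m + 2k` letters of `v` and on its infixes of
length at most `m + 2k`. This window of `w ++ s` takes finitely many values and is updated letter
by letter, so an automaton guessing the chunks recognises the set `R` of all such `s`.

`R` depends on `w` only through `D_{m,k}(w)`. If `|s| ≥ k`, the occurrence of `γα` in front of
the last `k` letters of `w ++ s` lies in `w` (a pair `(γα, ε)` of `C_{m,k}(w)`), in `s`, or
straddles the border through a suffix of `w` of length `< m + k`, which the second component
of `D_{m,k}` determines. If `|s| < k`, then `ᾱ^R` is the
suffix of length `j = k - |s|` of `w` followed by `s`, and the occurrence lies in `w` in front of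
that suffix: this is the pair `(γα, suf_j(w))` of `C_{m,k}(w)`.
-/

open scoped Classical

namespace Hairpin

variable {V : Type}

/-- Reversed complement of a word under the involution `bar`. -/
def rc (bar : V → V) (w : List V) : List V := (w.map bar).reverse

/-- `w` admits a right hairpin decomposition `w = δγαβᾱ^R` with `|α| = k`, `|γ| ≤ m`. -/
def hasRightDecomp (bar : V → V) (m k : ℕ) (w : List V) : Prop :=
  ∃ δ γ α β : List V, w = δ ++ γ ++ α ++ β ++ rc bar α ∧ α.length = k ∧ γ.length ≤ m

def hasLeftDecomp (bar : V → V) (m k : ℕ) (w : List V) : Prop :=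
  ∃ α β γ δ : List V, w = α ++ β ++ rc bar α ++ γ ++ δ ∧ α.length = k ∧ γ.length ≤ m

/-- m-bounded right k-hairpin incompletion. -/
noncomputable def rHI (bar : V → V) (m k : ℕ) (w : List V) : Set (List V) :=
  if hasRightDecomp bar m k w then
    { v | ∃ δ γ α β : List V, w = δ ++ γ ++ α ++ β ++ rc bar α ∧ α.length = k ∧
          γ.length ≤ m ∧ v = w ++ rc bar γ }
  else {w}

/-- m-bounded left k-hairpin incompletion. -/
noncomputable def lHI (bar : V → V) (m k : ℕ) (w : List V) : Set (List V) :=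
  if hasLeftDecomp bar m k w then
    { v | ∃ α β γ δ : List V, w = α ++ β ++ rc bar α ++ γ ++ δ ∧ α.length = k ∧
          γ.length ≤ m ∧ v = rc bar γ ++ w }
  else {w}

/-- m-bounded k-hairpin incompletion. -/
noncomputable def HI (bar : V → V) (m k : ℕ) (w : List V) : Set (List V) :=
  rHI bar m k w ∪ lHI bar m k w

noncomputable def rHIn (bar : V → V) (m k : ℕ) (w : List V) : ℕ → Set (List V)
  | 0 => {w}
  | n + 1 => ⋃ v ∈ rHIn bar m k w n, rHI bar m k v

noncomputable def rHIstar (bar : V → V) (m k : ℕ) (w : List V) : Set (List V) :=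
  ⋃ n, rHIn bar m k w n

noncomputable def HIn (bar : V → V) (m k : ℕ) (w : List V) : ℕ → Set (List V)
  | 0 => {w}
  | n + 1 => ⋃ v ∈ HIn bar m k w n, HI bar m k v

noncomputable def HIstar (bar : V → V) (m k : ℕ) (w : List V) : Set (List V) :=
  ⋃ n, HIn bar m k w n

noncomputable def rHIstarL (bar : V → V) (m k : ℕ) (L : Set (List V)) : Set (List V) :=
  ⋃ w ∈ L, rHIstar bar m k w

noncomputable def HIL (bar : V → V) (m k : ℕ) (L : Set (List V)) : Set (List V) :=
  ⋃ w ∈ L, HI bar m k w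

noncomputable def HIstarL (bar : V → V) (m k : ℕ) (L : Set (List V)) : Set (List V) :=
  ⋃ w ∈ L, HIstar bar m k w

/-- The set `C_{m,k}(w)`. -/
def Cmk (bar : V → V) (m k : ℕ) (w : List V) : Set (List V × List V) :=
  { p | ∃ x y w₁ w₂ z : List V,
      x.length ≤ m ∧ y.length = k ∧ w = w₁ ++ (x ++ y) ++ w₂ ∧
      z.length ≤ k ∧ z <:+ w₂ ∧ z <+: rc bar y ∧ p = (x ++ y, z) }

/-- The suffix component of `D_{m,k}(w)`: all suffixes of `w` of length `i+k-1`, `0 ≤ i ≤ m`. -/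
def DmkSuf (m k : ℕ) (w : List V) : Set (List V) :=
  { s | ∃ i ≤ m, s.length = i + k - 1 ∧ s <:+ w }

noncomputable def Dmk (bar : V → V) (m k : ℕ) (w : List V) :
    Set (List V × List V) × Set (List V) :=
  (Cmk bar m k w, DmkSuf m k w)

/-- The set `C'_{m,k}(w)`. -/
def Cmk' (bar : V → V) (m k : ℕ) (w : List V) : Set (List V × List V) :=
  { p | ∃ x y w₁ w₂ z : List V,
      x.length ≤ m ∧ y.length = k ∧ w = w₁ ++ (y ++ x) ++ w₂ ∧
      z.length ≤ k ∧ z <+: w₁ ∧ z <:+ rc bar y ∧ p = (z, y ++ x) }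

/-- The prefix component of `D'_{m,k}(w)`. -/
def DmkPref (m k : ℕ) (w : List V) : Set (List V) :=
  { s | ∃ i ≤ m, s.length = i + k - 1 ∧ s <+: w }

noncomputable def Dmk' (bar : V → V) (m k : ℕ) (w : List V) :
    Set (List V × List V) × Set (List V) :=
  (Cmk' bar m k w, DmkPref m k w)

noncomputable def Emk (bar : V → V) (m k : ℕ) (w : List V) :=
  (Dmk bar m k w, Dmk' bar m k w)


/-- View a set of words as a `Language`. -/
def lang {V : Type} (L : Set (List V)) : Language V := L


variable {V : Type} [Fintype V]

section ListLemmas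

variable {α : Type*}

open List

theorem _root_.List.length_rtake (l : List α) (n : ℕ) : (l.rtake n).length = min n l.length := by
  simp only [rtake, length_drop]; omega

theorem _root_.List.rtake_suffix (l : List α) (n : ℕ) : l.rtake n <:+ l := drop_suffix _ _

theorem _root_.List.rdrop_append_rtake (l : List α) (n : ℕ) : l.rdrop n ++ l.rtake n = l :=
  take_append_drop _ _

theorem _root_.List.rtake_rtake (l : List α) {j n : ℕ} (h : j ≤ n) :
    (l.rtake n).rtake j = l.rtake j := by
  simp only [rtake, length_drop, drop_drop]
  congr 1
  omega

theorem _root_.List.rtake_append_of_le (a b : List α) {n : ℕ} (h : n ≤ b.length) :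
    (a ++ b).rtake n = b.rtake n := by
  simp only [rtake, length_append]
  rw [show a.length + b.length - n = a.length + (b.length - n) by omega, drop_append]
  simp

theorem _root_.List.rtake_append_of_ge (a b : List α) {n : ℕ} (h : b.length ≤ n) :
    (a ++ b).rtake n = a.rtake (n - b.length) ++ b := by
  simp only [rtake, length_append]
  rw [show a.length + b.length - n = a.length - (n - b.length) by omega,
    drop_append_of_le_length (by omega)]

theorem _root_.List.rdrop_append_of_ge (a b : List α) {n : ℕ} (h : b.length ≤ n) :
    (a ++ b).rdrop n = a.rdrop (n - b.length) := by
  rw [← rdrop_append_length_add (l₁ := a) (l₂ := b) (n - b.length), Nat.add_sub_cancel' h]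

theorem _root_.List.rtake_append_rtake (l c : List α) (n : ℕ) :
    (l.rtake n ++ c).rtake n = (l ++ c).rtake n := by
  rcases le_total n c.length with h | h
  · rw [rtake_append_of_le _ _ h, rtake_append_of_le _ _ h]
  · rw [rtake_append_of_ge _ _ h, rtake_append_of_ge _ _ h, rtake_rtake _ (Nat.sub_le n _)]

theorem _root_.List.IsSuffix.rtake_length_eq {t l : List α} (h : t <:+ l) : l.rtake t.length = t :=
  (suffix_iff_eq_drop.mp h).symm

theorem _root_.List.suffix_rtake_iff {u l : List α} {n : ℕ} (hn : u.length ≤ n) :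
    u <:+ l.rtake n ↔ u <:+ l := by
  refine ⟨fun h => h.trans (rtake_suffix _ _), fun h => ?_⟩
  rw [← h.rtake_length_eq, ← rtake_rtake l hn]
  exact rtake_suffix _ _

theorem _root_.List.infix_rdrop_iff {u l : List α} {k : ℕ} (hk : k ≤ l.length) :
    u <:+: l.rdrop k ↔ ∃ z, z.length = k ∧ u ++ z <:+: l := by
  constructor
  · rintro ⟨p, q, h⟩
    refine ⟨(q ++ l.rtake k).take k, by simp [length_rtake]; omega,
      p, (q ++ l.rtake k).drop k, ?_⟩
    conv_rhs => rw [← rdrop_append_rtake l k, ← h]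
    simp
  · rintro ⟨z, hz, p, q, h⟩
    have hpre : p ++ u <+: l.rdrop k := by
      rw [rdrop, prefix_take_iff]
      refine ⟨⟨z ++ q, by rw [← h]; simp⟩, ?_⟩
      have := congrArg length h
      simp only [length_append] at this ⊢
      omega
    exact infix_append_right.trans hpre.isInfix

theorem _root_.List.infix_append_of_forall {u a₁ a₂ t : List α} (hinf : u <:+: a₁ → u <:+: a₂)
    (hsuf : ∀ u₁, u₁.length < u.length → u₁ <:+ a₁ → u₁ <:+ a₂) (h : u <:+: a₁ ++ t) :
    u <:+: a₂ ++ t := by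
  rcases infix_append_iff_ne_nil.mp h with h | h | ⟨u₁, u₂, -, hu₂, rfl, hs, hp⟩
  · exact (hinf h).trans infix_append_left
  · exact h.trans infix_append_right
  · have hlen : u₁.length < (u₁ ++ u₂).length := by
      simp [length_pos_iff.mpr hu₂]
    exact infix_append_iff.mpr (Or.inr (Or.inr ⟨u₁, u₂, rfl, hsuf u₁ hlen hs, hp⟩))

def _root_.List.infixesUpTo (n : ℕ) (l : List α) : Set (List α) := {u | u.length ≤ n ∧ u <:+: l}

def _root_.List.window (n : ℕ) (l : List α) : List α × Set (List α) := (l.rtake n, infixesUpTo n l)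

theorem _root_.List.window_concat (n : ℕ) (l : List α) (a : α) :
    window n (l ++ [a]) = (((window n l).1 ++ [a]).rtake n,
      (window n l).2 ∪ {u | u.length ≤ n ∧ u <:+ (window n l).1 ++ [a]}) := by
  simp only [window, rtake_append_rtake, Prod.mk.injEq, true_and]
  ext u
  simp only [infixesUpTo, Set.mem_union, Set.mem_ofPred_eq, infix_concat_iff]
  constructor
  · rintro ⟨hu, hs | hi⟩
    · refine Or.inr ⟨hu, ?_⟩
      rw [← suffix_rtake_iff hu, rtake_append_rtake, suffix_rtake_iff hu]
      exact hs
    · exact Or.inl ⟨hu, hi⟩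
  · rintro (⟨hu, hi⟩ | ⟨hu, hs⟩)
    · exact ⟨hu, Or.inr hi⟩
    · refine ⟨hu, Or.inl ?_⟩
      rw [← suffix_rtake_iff hu, ← rtake_append_rtake, suffix_rtake_iff hu]
      exact hs

theorem _root_.List.finite_range_window [Finite α] (n : ℕ) :
    (Set.range (window (α := α) n)).Finite := by
  have hl := finite_length_le α n
  refine (hl.prod hl.finite_subsets).subset ?_
  rintro _ ⟨l, rfl⟩
  exact ⟨(length_rtake l n).trans_le (min_le_left _ _), fun u hu => hu.1⟩

end ListLemmas

section ChunkClosure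

variable {α Q : Type*}

inductive ChunkClosure (P : List α → List α → Prop) : List α → Prop
  | nil : ChunkClosure P []
  | append {s c : List α} : ChunkClosure P s → P s c → ChunkClosure P (s ++ c)

variable (f : List α → Q) (P : List α → List α → Prop) (n : ℕ)

def chunkStates : Set (Q × List α) := {x | x.1 ∈ Set.range f ∧ x.2.length ≤ n}

/-- Being in state `(f x, p)` after reading `x` means that `x ++ p` lies in the chunk closure,
`p` being the unread rest of the current chunk. -/
def chunkNFA : NFA α (chunkStates f n) where
  step x a := {y | ∃ s, f s = x.1.1 ∧ f (s ++ [a]) = y.1.1 ∧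
    (x.1.2 = a :: y.1.2 ∨ x.1.2 = [] ∧ P s (a :: y.1.2))}
  start := {x | x.1 = (f [], [])}
  accept := {x | x.1.2 = []}

variable {f P n}

theorem chunkNFA_eval_sound (hf : ∀ s t a, f s = f t → f (s ++ [a]) = f (t ++ [a]))
    (hP : ∀ s t c, f s = f t → P s c → P t c) (x : List α) :
    ∀ y ∈ (chunkNFA f P n).eval x, y.1.1 = f x ∧ ChunkClosure P (x ++ y.1.2) := by
  induction x using List.reverseRecOn with
  | nil =>
    rintro y hy
    simp only [chunkNFA, NFA.eval_nil, Set.mem_ofPred_eq] at hy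
    simp [hy, ChunkClosure.nil]
  | append_singleton x a ih =>
    intro y hy
    rw [NFA.eval_append_singleton, NFA.mem_stepSet] at hy
    obtain ⟨y₀, hy₀, s, hs, hsa, hstep⟩ := hy
    obtain ⟨hfx, hcl⟩ := ih y₀ hy₀
    refine ⟨hsa ▸ hf s x a (hs.trans hfx), ?_⟩
    rcases hstep with hp | ⟨hp, hPs⟩
    · simpa [hp] using hcl
    · rw [hp, List.append_nil] at hcl
      simpa using hcl.append (hP s x _ (hs.trans hfx) hPs)

theorem chunkNFA_evalFrom_pending {S : Set (chunkStates f n)} (x p r : List α) :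
    ∀ y₀ ∈ S, y₀.1 = (f x, p ++ r) →
      ∀ y : chunkStates f n, y.1 = (f (x ++ p), r) → y ∈ (chunkNFA f P n).evalFrom S p := by
  induction p generalizing x S with
  | nil =>
    intro y₀ hy₀ h₀ y hy
    rwa [Subtype.ext (hy.trans (by simpa using h₀.symm))]
  | cons a p ih =>
    intro y₀ hy₀ h₀ y hy
    have hmem : (f (x ++ [a]), p ++ r) ∈ chunkStates f n := by
      refine ⟨⟨_, rfl⟩, ?_⟩
      have := y₀.2.2
      simp only [h₀, List.cons_append, List.length_cons] at this
      exact (Nat.le_succ _).trans this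
    rw [NFA.evalFrom_cons]
    refine ih (x ++ [a]) ⟨_, hmem⟩ ?_ rfl y (by simpa using hy)
    exact NFA.mem_stepSet.mpr ⟨y₀, hy₀, x, by rw [h₀], rfl, Or.inl (by rw [h₀]; rfl)⟩

theorem chunkNFA_eval_complete (hn : ∀ s c, P s c → c.length ≤ n) {x : List α}
    (hx : ChunkClosure P x) :
    ∀ y : chunkStates f n, y.1 = (f x, []) → y ∈ (chunkNFA f P n).eval x := by
  induction hx with
  | nil => exact fun y hy => hy
  | @append s c _ hPc ih =>
    rcases c with _ | ⟨a, r⟩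
    · simpa using ih
    intro y hy
    have hmem : (f (s ++ [a]), r) ∈ chunkStates f n :=
      ⟨⟨_, rfl⟩, (Nat.le_succ _).trans (hn s _ hPc)⟩
    have hstep : ⟨_, hmem⟩ ∈ (chunkNFA f P n).eval (s ++ [a]) := by
      rw [NFA.eval_append_singleton, NFA.mem_stepSet]
      exact ⟨⟨(f s, []), ⟨s, rfl⟩, by simp⟩, ih _ rfl, s, rfl, rfl, Or.inr ⟨rfl, hPc⟩⟩
    rw [show s ++ a :: r = s ++ [a] ++ r by simp, NFA.eval, NFA.evalFrom_append]
    exact chunkNFA_evalFrom_pending (s ++ [a]) r [] _ hstep (by simp) y (by simpa using hy)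

theorem chunkNFA_accepts (hf : ∀ s t a, f s = f t → f (s ++ [a]) = f (t ++ [a]))
    (hP : ∀ s t c, f s = f t → P s c → P t c) (hn : ∀ s c, P s c → c.length ≤ n) :
    (chunkNFA f P n).accepts = {x | ChunkClosure P x} := by
  ext x
  rw [NFA.mem_accepts]
  constructor
  · rintro ⟨y, hacc, hy⟩
    have := (chunkNFA_eval_sound hf hP x y hy).2
    rwa [show y.1.2 = [] from hacc, List.append_nil] at this
  · intro hx
    exact ⟨⟨(f x, []), ⟨x, rfl⟩, by simp⟩, rfl, chunkNFA_eval_complete hn hx _ rfl⟩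

theorem isRegular_chunkClosure [Finite α] (hfin : (Set.range f).Finite)
    (hf : ∀ s t a, f s = f t → f (s ++ [a]) = f (t ++ [a]))
    (hP : ∀ s t c, f s = f t → P s c → P t c) (hn : ∀ s c, P s c → c.length ≤ n) :
    Language.IsRegular ({x | ChunkClosure P x} : Language α) := by
  have : Finite (chunkStates f n) :=
    (hfin.prod (List.finite_length_le α n)).subset (fun x hx => hx) |>.to_subtype
  have := Fintype.ofFinite (chunkStates f n)
  exact Language.isRegular_iff.mpr ⟨_, inferInstance, (chunkNFA f P n).toDFA,
    by rw [NFA.toDFA_correct, chunkNFA_accepts hf hP hn]⟩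

end ChunkClosure

section RightHairpin

variable {α : Type} {bar : α → α} {m k : ℕ}

@[simp] theorem length_rc (bar : α → α) (l : List α) : (rc bar l).length = l.length := by
  simp [rc]

theorem rc_rc (hbar : Function.Involutive bar) (l : List α) : rc bar (rc bar l) = l := by
  simp [rc, List.map_reverse, hbar.comp_self]

/-- `γ` is as in a decomposition `v = δγαβᾱ^R` of the definition of `rHI`. -/
def IsRHIPivot (bar : α → α) (m k : ℕ) (v γ : List α) : Prop :=
  ∃ δ α' β, v = δ ++ γ ++ α' ++ β ++ rc bar α' ∧ α'.length = k ∧ γ.length ≤ m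

theorem rHI_eq_insert (v : List α) :
    rHI bar m k v = insert v ((fun γ => v ++ rc bar γ) '' {γ | IsRHIPivot bar m k v γ}) := by
  unfold rHI
  split_ifs with h
  · ext x
    simp only [Set.mem_ofPred_eq, Set.mem_insert_iff, Set.mem_image]
    constructor
    · rintro ⟨δ, γ, α', β, hv, hα, hγ, rfl⟩
      exact Or.inr ⟨γ, ⟨δ, α', β, hv, hα, hγ⟩, rfl⟩
    · rintro (rfl | ⟨γ, ⟨δ, α', β, hv, hα, hγ⟩, rfl⟩)
      · obtain ⟨δ, γ, α', β, hv, hα, -⟩ := h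
        exact ⟨δ ++ γ, [], α', β, by simp [hv], hα, by simp, by simp [rc]⟩
      · exact ⟨δ, γ, α', β, hv, hα, hγ, rfl⟩
  · have hempty : {γ | IsRHIPivot bar m k v γ} = ∅ :=
      Set.eq_empty_of_forall_notMem fun γ ⟨δ, α', β, hv, hα, hγ⟩ => h ⟨δ, γ, α', β, hv, hα, hγ⟩
    simp [hempty]

def rhiChunk (bar : α → α) (m k : ℕ) (w s c : List α) : Prop :=
  ∃ γ, IsRHIPivot bar m k (w ++ s) γ ∧ rc bar γ = c

theorem rHIstar_eq_image (w : List α) :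
    rHIstar bar m k w = (w ++ ·) '' {s | ChunkClosure (rhiChunk bar m k w) s} := by
  ext v
  simp only [rHIstar, Set.mem_iUnion, Set.mem_image, Set.mem_ofPred_eq]
  constructor
  · rintro ⟨i, hv⟩
    induction i generalizing v with
    | zero => exact ⟨[], .nil, by simpa [rHIn] using hv.symm⟩
    | succ i ih =>
      simp only [rHIn, Set.mem_iUnion] at hv
      obtain ⟨u, hu, hvu⟩ := hv
      obtain ⟨s, hs, rfl⟩ := ih u hu
      rw [rHI_eq_insert] at hvu
      rcases hvu with rfl | ⟨γ, hγ, rfl⟩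
      · exact ⟨s, hs, rfl⟩
      · exact ⟨s ++ rc bar γ, hs.append ⟨γ, hγ, rfl⟩, by simp⟩
  · rintro ⟨s, hs, rfl⟩
    induction hs with
    | nil => exact ⟨0, by simp [rHIn]⟩
    | @append s c _ hc ih =>
      obtain ⟨i, hi⟩ := ih
      obtain ⟨γ, hγ, rfl⟩ := hc
      refine ⟨i + 1, Set.mem_biUnion hi ?_⟩
      rw [rHI_eq_insert]
      exact Or.inr ⟨γ, hγ, by simp⟩

theorem isRHIPivot_iff_infix_rdrop (hbar : Function.Involutive bar) {v γ : List α} :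
    IsRHIPivot bar m k v γ ↔
      γ.length ≤ m ∧ k ≤ v.length ∧ γ ++ rc bar (v.rtake k) <:+: v.rdrop k := by
  constructor
  · rintro ⟨δ, α', β, rfl, hα, hγ⟩
    have hk : k = (rc bar α').length := by simp [hα]
    refine ⟨hγ, by simp; omega, δ, β, ?_⟩
    rw [hk, (List.suffix_append _ _).rtake_length_eq, List.rdrop_append_length, rc_rc hbar]
    simp
  · rintro ⟨hγ, hk, δ, β, h⟩
    refine ⟨δ, rc bar (v.rtake k), β, ?_, by simp [List.length_rtake]; omega, hγ⟩
    conv_lhs => rw [← List.rdrop_append_rtake v k, ← h]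
    simp [rc_rc hbar]

theorem isRHIPivot_congr_window (hbar : Function.Involutive bar) {v v' γ : List α}
    (h : List.window (m + 2 * k) v = List.window (m + 2 * k) v') :
    IsRHIPivot bar m k v γ ↔ IsRHIPivot bar m k v' γ := by
  suffices key : ∀ v : List α, IsRHIPivot bar m k v γ ↔ γ.length ≤ m ∧
      k ≤ (List.window (m + 2 * k) v).1.length ∧ ∃ z : List α, z.length = k ∧
        γ ++ rc bar ((List.window (m + 2 * k) v).1.rtake k) ++ z ∈ (List.window (m + 2 * k) v).2 by
    rw [key, key, h]
  intro v
  rw [isRHIPivot_iff_infix_rdrop hbar]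
  simp only [List.window, List.infixesUpTo, List.length_rtake, List.rtake_rtake v
    (show k ≤ m + 2 * k by omega), Set.mem_ofPred_eq, List.length_append, length_rc]
  refine and_congr_right fun hγ => ?_
  constructor
  · rintro ⟨hk, hinf⟩
    obtain ⟨z, hz, hinf⟩ := (List.infix_rdrop_iff hk).1 hinf
    exact ⟨by omega, z, hz, by omega, hinf⟩
  · rintro ⟨hk, z, hz, -, hinf⟩
    have hk : k ≤ v.length := by omega
    exact ⟨hk, (List.infix_rdrop_iff hk).2 ⟨z, hz, hinf⟩⟩

theorem isRegular_rhiChunk_closure [Finite α] (hbar : Function.Involutive bar) (w : List α) :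
    Language.IsRegular (lang {s | ChunkClosure (rhiChunk bar m k w) s}) :=
  isRegular_chunkClosure (f := fun s => List.window (m + 2 * k) (w ++ s)) (n := m)
    ((List.finite_range_window _).subset fun _ ⟨s, hs⟩ => ⟨w ++ s, hs⟩)
    (fun s t a h => by simp only [← List.append_assoc, List.window_concat, h])
    (fun _ _ _ h ⟨γ, hγ, hc⟩ => ⟨γ, (isRHIPivot_congr_window hbar h).1 hγ, hc⟩)
    (fun _ _ ⟨γ, ⟨_, _, _, _, _, hγ⟩, hc⟩ => hc ▸ (length_rc bar γ).trans_le hγ)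

end RightHairpin

section Transfer

variable {α : Type} {bar : α → α} {m k : ℕ}

theorem suffix_of_DmkSuf_eq {w₁ w₂ t : List α} (hw : k ≤ w₁.length)
    (hS : DmkSuf m k w₁ = DmkSuf m k w₂) (ht : t.length < m + k) (htw : t <:+ w₁) : t <:+ w₂ := by
  by_cases hlen : k ≤ t.length + 1
  · have hmem : t ∈ DmkSuf m k w₁ := ⟨t.length + 1 - k, by omega, by omega, htw⟩
    rw [hS] at hmem
    obtain ⟨-, -, -, hsuf⟩ := hmem
    exact hsuf
  · have hmem : w₁.rtake (k - 1) ∈ DmkSuf m k w₁ :=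
      ⟨0, by omega, by simp [List.length_rtake]; omega, List.rtake_suffix _ _⟩
    rw [hS] at hmem
    obtain ⟨-, -, -, hsuf⟩ := hmem
    exact ((List.suffix_rtake_iff (by omega)).2 htw).trans hsuf

theorem rtake_eq_of_DmkSuf_eq (hm : 1 ≤ m) {w₁ w₂ : List α} (hw : k ≤ w₁.length)
    (hS : DmkSuf m k w₁ = DmkSuf m k w₂) {j : ℕ} (hj : j ≤ k) : w₁.rtake j = w₂.rtake j := by
  have hlen : (w₁.rtake j).length = j := by simp [List.length_rtake]; omega
  have hsuf := suffix_of_DmkSuf_eq hw hS (by omega) (List.rtake_suffix w₁ j)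
  rw [← hsuf.rtake_length_eq, hlen]

theorem infix_rdrop_iff_mem_Cmk {w γ y : List α} {j : ℕ} (hγ : γ.length ≤ m) (hy : y.length = k)
    (hj : j ≤ k) (hz : w.rtake j <+: rc bar y) :
    γ ++ y <:+: w.rdrop j ↔ (γ ++ y, w.rtake j) ∈ Cmk bar m k w := by
  constructor
  · rintro ⟨p, q, h⟩
    refine ⟨γ, y, p, q ++ w.rtake j, w.rtake j, hγ, hy, ?_,
      by simp [List.length_rtake]; omega, List.suffix_append _ _, hz, rfl⟩
    conv_lhs => rw [← List.rdrop_append_rtake w j, ← h]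
    simp
  · rintro ⟨x, y', p, q, z, -, hy', hw, -, hzq, -, hpair⟩
    simp only [Prod.mk.injEq] at hpair
    obtain ⟨hxy, rfl⟩ := hpair
    have hjq : j ≤ q.length := by
      have := hzq.length_le
      have hwlen := congrArg List.length hw
      simp only [List.length_append, List.length_rtake] at this hwlen
      omega
    refine ⟨p, q.rdrop j, ?_⟩
    rw [hw, List.rdrop_append_of_le_length _ hjq, hxy]

theorem isRHIPivot_append_of_Dmk_eq (hbar : Function.Involutive bar) (hm : 1 ≤ m)
    {w₁ w₂ : List α} (hw₁ : k ≤ w₁.length) (hw₂ : k ≤ w₂.length)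
    (h : Dmk bar m k w₁ = Dmk bar m k w₂) {s γ : List α} (hext : IsRHIPivot bar m k (w₁ ++ s) γ) :
    IsRHIPivot bar m k (w₂ ++ s) γ := by
  have hC : Cmk bar m k w₁ = Cmk bar m k w₂ := congrArg Prod.fst h
  have hS : DmkSuf m k w₁ = DmkSuf m k w₂ := congrArg Prod.snd h
  rw [isRHIPivot_iff_infix_rdrop hbar] at hext ⊢
  obtain ⟨hγ, -, hinf⟩ := hext
  refine ⟨hγ, by simp; omega, ?_⟩
  rcases le_or_gt k s.length with hs | hs
  · rw [List.rtake_append_of_le _ _ hs, List.rdrop_append_of_le_length _ hs] at hinf ⊢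
    have hy : (rc bar (s.rtake k)).length = k := by simp [List.length_rtake]; omega
    have key (w : List α) :=
      infix_rdrop_iff_mem_Cmk (bar := bar) (w := w) (j := 0) hγ hy (Nat.zero_le k) (by simp)
    simp only [List.rdrop_zero, List.rtake_zero] at key
    refine List.infix_append_of_forall (fun hu => (key w₂).2 (hC ▸ (key w₁).1 hu))
      (fun u₁ hu₁ => suffix_of_DmkSuf_eq hw₁ hS ?_) hinf
    simp only [List.length_append, hy] at hu₁
    omega
  · rw [List.rtake_append_of_ge _ _ hs.le, List.rdrop_append_of_ge _ _ hs.le] at hinf ⊢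
    have hr := rtake_eq_of_DmkSuf_eq hm hw₁ hS (Nat.sub_le k s.length)
    rw [hr] at hinf
    have hy : (rc bar (w₂.rtake (k - s.length) ++ s)).length = k := by
      simp [List.length_rtake]; omega
    have hz : w₂.rtake (k - s.length) <+: rc bar (rc bar (w₂.rtake (k - s.length) ++ s)) := by
      rw [rc_rc hbar]
      exact List.prefix_append _ _
    have hmem := (infix_rdrop_iff_mem_Cmk hγ hy (Nat.sub_le k s.length) (by rwa [hr])).1 hinf
    rw [hC, hr] at hmem
    exact (infix_rdrop_iff_mem_Cmk hγ hy (Nat.sub_le k s.length) hz).2 hmem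

theorem rhiChunk_eq_of_Dmk_eq (hbar : Function.Involutive bar) (hm : 1 ≤ m)
    {w₁ w₂ : List α} (hw₁ : k ≤ w₁.length) (hw₂ : k ≤ w₂.length)
    (h : Dmk bar m k w₁ = Dmk bar m k w₂) : rhiChunk bar m k w₁ = rhiChunk bar m k w₂ := by
  funext s c
  exact propext <| exists_congr fun γ => and_congr_left'
    ⟨isRHIPivot_append_of_Dmk_eq hbar hm hw₁ hw₂ h,
      isRHIPivot_append_of_Dmk_eq hbar hm hw₂ hw₁ h.symm⟩

end Transfer

theorem rHIstar_eq_concat_regular_general (bar : V → V) (hbar : ∀ a, bar (bar a) = a) (m k : ℕ) (hm : 1 ≤ m)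
    (w₁ w₂ : List V) (h₁ : 2 * k ≤ w₁.length) (h₂ : 2 * k ≤ w₂.length)
    (h : Dmk bar m k w₁ = Dmk bar m k w₂) :
    ∃ R : Set (List V), Language.IsRegular (lang R) ∧
      rHIstar bar m k w₁ = (fun r => w₁ ++ r) '' R ∧
      rHIstar bar m k w₂ = (fun r => w₂ ++ r) '' R := by
  refine ⟨{s | ChunkClosure (rhiChunk bar m k w₁) s}, isRegular_rhiChunk_closure hbar w₁,
    rHIstar_eq_image w₁, ?_⟩
  rw [rHIstar_eq_image, rhiChunk_eq_of_Dmk_eq hbar hm (by omega) (by omega) h]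

theorem rHIstar_eq_concat_regular (bar : V → V) (hbar : ∀ a, bar (bar a) = a) (m k : ℕ) (hm : 1 ≤ m) (hk : 1 ≤ k)
    (w₁ w₂ : List V) (h₁ : 2 * k ≤ w₁.length) (h₂ : 2 * k ≤ w₂.length)
    (h : Dmk bar m k w₁ = Dmk bar m k w₂) :
    ∃ R : Set (List V), Language.IsRegular (lang R) ∧
      rHIstar bar m k w₁ = (fun r => w₁ ++ r) '' R ∧
      rHIstar bar m k w₂ = (fun r => w₂ ++ r) '' R :=
  rHIstar_eq_concat_regular_general bar hbar m k hm w₁ w₂ h₁ h₂ h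

end Hairpin
end

section
/- The equivalence relation ≡_{E_{m,k}} is both right invariant and left invariant: for words w₁, w₂ of length ≥ 2k with E_{m,k}(w₁) = E_{m,k}(w₂), for all words r and l one has E_{m,k}(w₁r) = E_{m,k}(w₂r) and E_{m,k}(lw₁) = E_{m,k}(lw₂). -/
open scoped Classical

namespace Hairpin

variable {V : Type}

/-!
Reversal exchanges `C` with `C'` (along `(u, v) ↦ (v^R, u^R)`) and suffixes with prefixes, so
`E_{m,k}(w^R)` is determined by `E_{m,k}(w)` and left invariance is right invariance for the
reversed words.

For right invariance, a word shorter than `m + k` is pinned down by `E_{m,k}`: it is a prefix of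
the other word by `D'`, and `C` records all infixes of length between `k` and `m + k`. For longer
words, `D` and `D'` say that `w₁` and `w₂` share their prefixes and suffixes of length `< m + k`.
An occurrence of `xy` (or `yx`) in `w₁ r` either lies inside `w₁`, where `C` (or `C'`) moves it
into `w₂`, or ends inside `r`, so that its overlap with `w₁` is a short suffix, shared by `w₂`.
-/

section

variable {V : Type} {bar : V → V} {m k : ℕ}

lemma exists_append_eq_or_length_lt_of_append_eq {w r a v b : List V}
    (h : w ++ r = a ++ v ++ b) : (∃ u, w = a ++ v ++ u ∧ b = u ++ r) ∨ b.length < r.length := by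
  rcases lt_or_ge b.length r.length with hb | hb
  · exact Or.inr hb
  obtain ⟨u, rfl⟩ := List.suffix_of_suffix_length_le (List.suffix_append w r)
    (h ▸ List.suffix_append (a ++ v) b) hb
  exact Or.inl ⟨u, List.append_cancel_right (by simpa using h), rfl⟩

lemma isSuffix_or_exists_of_isSuffix_append {s w r : List V} (h : s <:+ w ++ r) :
    s <:+ r ∨ ∃ s', s = s' ++ r ∧ s' <:+ w := by
  rcases le_or_gt s.length r.length with hs | hs
  · exact Or.inl (List.suffix_of_suffix_length_le h (List.suffix_append w r) hs)
  obtain ⟨s', rfl⟩ := List.suffix_of_suffix_length_le (List.suffix_append w r) h hs.le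
  exact Or.inr ⟨s', rfl, List.suffix_append_self_iff.1 h⟩

lemma isSuffix_append_of_forall_isSuffix {n : ℕ} {w₁ w₂ r s : List V}
    (hsuf : ∀ z : List V, z.length < n → z <:+ w₁ → z <:+ w₂)
    (hs : s <:+ w₁ ++ r) (hsn : s.length < n + r.length) : s <:+ w₂ ++ r := by
  rcases isSuffix_or_exists_of_isSuffix_append hs with hr | ⟨s', rfl, hs'⟩
  · exact List.suffix_append_of_suffix hr
  · simp only [List.length_append] at hsn
    exact List.suffix_append_self_iff.2 (hsuf s' (by omega) hs')

lemma rc_reverse (w : List V) : rc bar w.reverse = (rc bar w).reverse := by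
  simp [rc, List.map_reverse]

def swapReverse (p : List V × List V) : List V × List V := (p.2.reverse, p.1.reverse)

@[simp]
lemma swapReverse_swapReverse (p : List V × List V) : swapReverse (swapReverse p) = p := by
  simp [swapReverse]

lemma swapReverse_mem_Cmk'_reverse {w : List V} {p : List V × List V}
    (hp : p ∈ Cmk bar m k w) : swapReverse p ∈ Cmk' bar m k w.reverse := by
  obtain ⟨x, y, a, b, z, hx, hy, rfl, hzk, hzb, hzy, rfl⟩ := hp
  exact ⟨x.reverse, y.reverse, b.reverse, a.reverse, z.reverse, by simpa, by simpa, by simp,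
    by simpa, List.reverse_prefix.2 hzb, by simpa [rc_reverse] using hzy, by simp [swapReverse]⟩

lemma swapReverse_mem_Cmk_reverse {w : List V} {p : List V × List V}
    (hp : p ∈ Cmk' bar m k w) : swapReverse p ∈ Cmk bar m k w.reverse := by
  obtain ⟨x, y, a, b, z, hx, hy, rfl, hzk, hza, hzy, rfl⟩ := hp
  exact ⟨x.reverse, y.reverse, b.reverse, a.reverse, z.reverse, by simpa, by simpa, by simp,
    by simpa, List.reverse_suffix.2 hza, by simpa [rc_reverse] using hzy, by simp [swapReverse]⟩

lemma Cmk'_reverse (w : List V) : Cmk' bar m k w.reverse = swapReverse ⁻¹' Cmk bar m k w := by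
  ext p
  exact ⟨fun hp => by simpa using swapReverse_mem_Cmk_reverse hp,
    fun hp => by simpa using swapReverse_mem_Cmk'_reverse hp⟩

lemma Cmk_reverse (w : List V) : Cmk bar m k w.reverse = swapReverse ⁻¹' Cmk' bar m k w := by
  ext p
  exact ⟨fun hp => by simpa using swapReverse_mem_Cmk'_reverse hp,
    fun hp => by simpa using swapReverse_mem_Cmk_reverse hp⟩

lemma DmkSuf_reverse (w : List V) : DmkSuf m k w.reverse = List.reverse ⁻¹' DmkPref m k w := by
  ext s
  simp only [DmkSuf, DmkPref, Set.mem_preimage, Set.mem_ofPred_eq, List.length_reverse,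
    ← List.reverse_suffix (l₁ := s.reverse), List.reverse_reverse]

lemma DmkPref_reverse (w : List V) : DmkPref m k w.reverse = List.reverse ⁻¹' DmkSuf m k w := by
  ext s
  simp only [DmkSuf, DmkPref, Set.mem_preimage, Set.mem_ofPred_eq, List.length_reverse,
    ← List.reverse_prefix (l₁ := s.reverse), List.reverse_reverse]

lemma Emk_reverse_congr {w₁ w₂ : List V} (h : Emk bar m k w₁ = Emk bar m k w₂) :
    Emk bar m k w₁.reverse = Emk bar m k w₂.reverse := by
  simp only [Emk, Dmk, Dmk', Prod.mk.injEq] at h ⊢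
  obtain ⟨⟨hC, hS⟩, hC', hP⟩ := h
  simp only [Cmk_reverse, Cmk'_reverse, DmkSuf_reverse, DmkPref_reverse, hC, hS, hC', hP,
    and_self]

lemma exists_of_mem_Cmk {w v z : List V} (h : (v, z) ∈ Cmk bar m k w) :
    ∃ a u, w = a ++ v ++ u ∧ z <:+ u := by
  obtain ⟨x, y, a, u, z', -, -, hw, -, hzu, -, hp⟩ := h
  obtain ⟨rfl, rfl⟩ := Prod.mk.inj hp
  exact ⟨a, u, hw, hzu⟩

lemma exists_of_mem_Cmk' {w v z : List V} (h : (z, v) ∈ Cmk' bar m k w) :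
    ∃ a u, w = a ++ v ++ u ∧ z <+: a := by
  obtain ⟨x, y, a, u, z', -, -, hw, -, hza, -, hp⟩ := h
  obtain ⟨rfl, rfl⟩ := Prod.mk.inj hp
  exact ⟨a, u, hw, hza⟩

lemma isInfix_of_Cmk_subset {w₁ w₂ v : List V} (hC : Cmk bar m k w₁ ⊆ Cmk bar m k w₂)
    (hv : v <:+: w₁) (hkv : k ≤ v.length) (hvm : v.length ≤ m + k) : v <:+: w₂ := by
  obtain ⟨a, u, rfl⟩ := hv
  have hmem : (v, []) ∈ Cmk bar m k (a ++ v ++ u) :=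
    ⟨v.take (v.length - k), v.drop (v.length - k), a, u, [], by simp; omega, by simp; omega,
      by simp, by simp, List.nil_suffix, List.nil_prefix, by simp⟩
  obtain ⟨a₂, u₂, rfl, -⟩ := exists_of_mem_Cmk (hC hmem)
  exact ⟨a₂, u₂, rfl⟩

lemma isSuffix_of_DmkSuf_eq {w₁ w₂ z : List V} (hS : DmkSuf m k w₁ = DmkSuf m k w₂)
    (hw : k ≤ w₁.length + 1) (hzn : z.length < m + k) (hz : z <:+ w₁) : z <:+ w₂ := by
  rcases le_or_gt (k - 1) z.length with hkz | hzk
  · have hmem : z ∈ DmkSuf m k w₂ := hS ▸ ⟨z.length + 1 - k, by omega, by omega, hz⟩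
    obtain ⟨-, -, -, hzw₂⟩ := hmem
    exact hzw₂
  · have hmem : w₁.drop (w₁.length - (k - 1)) ∈ DmkSuf m k w₂ :=
      hS ▸ ⟨0, Nat.zero_le _, by simp; omega, List.drop_suffix _ _⟩
    obtain ⟨-, -, -, hsw₂⟩ := hmem
    exact (List.suffix_of_suffix_length_le hz (List.drop_suffix _ _) (by simp; omega)).trans hsw₂

lemma isPrefix_of_DmkPref_eq {w₁ w₂ z : List V} (hP : DmkPref m k w₁ = DmkPref m k w₂)
    (hw : k ≤ w₁.length + 1) (hzn : z.length < m + k) (hz : z <+: w₁) : z <+: w₂ := by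
  have hS : DmkSuf m k w₁.reverse = DmkSuf m k w₂.reverse := by
    rw [DmkSuf_reverse, DmkSuf_reverse, hP]
  simpa using isSuffix_of_DmkSuf_eq hS (by simpa) (by simpa) (List.reverse_suffix.2 hz)

lemma eq_of_length_lt {w₁ w₂ : List V} (hC : Cmk bar m k w₂ ⊆ Cmk bar m k w₁)
    (hP : DmkPref m k w₁ = DmkPref m k w₂) (hk : k ≤ w₁.length + 1)
    (hlt : w₁.length < m + k) : w₁ = w₂ := by
  have hpre : w₁ <+: w₂ := isPrefix_of_DmkPref_eq hP hk hlt (List.prefix_refl _)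
  refine hpre.eq_of_length_le (not_lt.1 fun hlong => ?_)
  have hinf := isInfix_of_Cmk_subset hC (List.take_prefix (w₁.length + 1) w₂).isInfix
    (by simp; omega) (by simp; omega)
  have := hinf.length_le
  simp only [List.length_take] at this
  omega

section Append

variable {w₁ w₂ r : List V}

lemma Cmk_append_subset (hC : Cmk bar m k w₁ ⊆ Cmk bar m k w₂)
    (hsuf : ∀ z : List V, z.length < m + k → z <:+ w₁ → z <:+ w₂) :
    Cmk bar m k (w₁ ++ r) ⊆ Cmk bar m k (w₂ ++ r) := by
  rintro _ ⟨x, y, a, b, z, hx, hy, hw, hzk, hzb, hzy, rfl⟩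
  rcases exists_append_eq_or_length_lt_of_append_eq hw with ⟨u, rfl, rfl⟩ | hb
  · rcases isSuffix_or_exists_of_isSuffix_append hzb with hzr | ⟨z', rfl, hz'⟩
    · obtain ⟨a₂, u₂, rfl, -⟩ := exists_of_mem_Cmk
        (hC ⟨x, y, a, u, [], hx, hy, rfl, by simp, List.nil_suffix, List.nil_prefix, rfl⟩)
      exact ⟨x, y, a₂, u₂ ++ r, z, hx, hy, by simp, hzk, List.suffix_append_of_suffix hzr,
        hzy, rfl⟩
    · obtain ⟨a₂, u₂, rfl, hz₂⟩ := exists_of_mem_Cmk (hC ⟨x, y, a, u, z', hx, hy, rfl,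
        le_trans (by simp) hzk, hz', (List.prefix_append z' r).trans hzy, rfl⟩)
      exact ⟨x, y, a₂, u₂ ++ r, z' ++ r, hx, hy, by simp, hzk,
        List.suffix_append_self_iff.2 hz₂, hzy, rfl⟩
  · obtain ⟨a₂, h₂⟩ := isSuffix_append_of_forall_isSuffix hsuf
      (⟨a, by simp [hw]⟩ : x ++ y ++ b <:+ w₁ ++ r) (by simp; omega)
    exact ⟨x, y, a₂, b, z, hx, hy, by simp [← h₂], hzk, hzb, hzy, rfl⟩

lemma DmkSuf_append_subset (hk : 1 ≤ k)
    (hsuf : ∀ z : List V, z.length < m + k → z <:+ w₁ → z <:+ w₂) :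
    DmkSuf m k (w₁ ++ r) ⊆ DmkSuf m k (w₂ ++ r) := fun _ ⟨i, hi, hs, hsw⟩ =>
  ⟨i, hi, hs, isSuffix_append_of_forall_isSuffix hsuf hsw (by omega)⟩

lemma DmkPref_append_subset (hk : 1 ≤ k) (hlong : m + k ≤ w₁.length)
    (hpre : ∀ z : List V, z.length < m + k → z <+: w₁ → z <+: w₂) :
    DmkPref m k (w₁ ++ r) ⊆ DmkPref m k (w₂ ++ r) := by
  rintro s ⟨i, hi, hs, hsw⟩
  have hsw₁ : s <+: w₁ := List.prefix_of_prefix_length_le hsw (List.prefix_append _ _) (by omega)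
  exact ⟨i, hi, hs, List.prefix_append_of_prefix (hpre s (by omega) hsw₁)⟩

lemma Cmk'_append_subset (hm : 1 ≤ m) (hw₁ : 2 * k ≤ w₁.length) (hw₂ : 2 * k ≤ w₂.length)
    (hC' : Cmk' bar m k w₁ ⊆ Cmk' bar m k w₂)
    (hsuf : ∀ z : List V, z.length < m + k → z <:+ w₁ → z <:+ w₂)
    (hpre : ∀ z : List V, z.length < m + k → z <+: w₁ → z <+: w₂) :
    Cmk' bar m k (w₁ ++ r) ⊆ Cmk' bar m k (w₂ ++ r) := by
  rintro _ ⟨x, y, a, b, z, hx, hy, hw, hzk, hza, hzy, rfl⟩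
  rcases exists_append_eq_or_length_lt_of_append_eq hw with ⟨u, rfl, rfl⟩ | hb
  · obtain ⟨a₂, u₂, rfl, hz₂⟩ :=
      exists_of_mem_Cmk' (hC' ⟨x, y, a, u, z, hx, hy, rfl, hzk, hza, hzy, rfl⟩)
    exact ⟨x, y, a₂, u₂ ++ r, z, hx, hy, by simp, hzk, hz₂, hzy, rfl⟩
  obtain ⟨a₂, h₂⟩ := isSuffix_append_of_forall_isSuffix hsuf
    (⟨a, by simp [hw]⟩ : y ++ x ++ b <:+ w₁ ++ r) (by simp; omega)
  have hlen₁ := congrArg List.length hw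
  have hlen₂ := congrArg List.length h₂
  simp only [List.length_append] at hlen₁ hlen₂
  have hzw₂ : z <+: w₂ ++ r := by
    have hzw₁ : z <+: w₁ :=
      List.prefix_of_prefix_length_le (hza.trans ⟨y ++ x ++ b, by rw [hw]; simp⟩)
        (List.prefix_append _ _) (by omega)
    exact List.prefix_append_of_prefix (hpre z (by omega) hzw₁)
  -- If `a₂` were shorter than `z`, then `y` would start among the first `k` letters of `w₂`
  -- and so end inside `w₁`; moving that occurrence into `w₂` along `hC'` keeps `z` before it.
  have hza₂ : z.length ≤ a₂.length := by
    by_contra! hlt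
    obtain ⟨xh, hxh⟩ : a ++ y <+: w₁ :=
      List.prefix_of_prefix_length_le (⟨x ++ b, by rw [hw]; simp⟩ : a ++ y <+: w₁ ++ r)
        (List.prefix_append _ _) (by simp; omega)
    have hlenxh := congrArg List.length hxh
    simp only [List.length_append] at hlenxh
    obtain ⟨a', u', hw₂', hza'⟩ := exists_of_mem_Cmk'
      (hC' ⟨xh, y, a, [], z, by omega, hy, by simp [← hxh], hzk, hza, hzy, rfl⟩)
    have hlen' := congrArg List.length hw₂'
    simp only [List.length_append] at hlen'
    have := hza'.length_le
    omega
  exact ⟨x, y, a₂, b, z, hx, hy, by simp [← h₂], hzk,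
    List.prefix_of_prefix_length_le hzw₂ ⟨y ++ x ++ b, by simp [← h₂]⟩ hza₂, hzy, rfl⟩

lemma Emk_append_le (hm : 1 ≤ m) (hk : 1 ≤ k) (hw₁ : 2 * k ≤ w₁.length)
    (hw₂ : 2 * k ≤ w₂.length) (hlong : m + k ≤ w₁.length)
    (h : Emk bar m k w₁ = Emk bar m k w₂) :
    Emk bar m k (w₁ ++ r) ≤ Emk bar m k (w₂ ++ r) := by
  simp only [Emk, Dmk, Dmk', Prod.mk.injEq] at h
  obtain ⟨⟨hC, hS⟩, hC', hP⟩ := h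
  have hsuf (z : List V) := isSuffix_of_DmkSuf_eq (z := z) hS (by omega)
  have hpre (z : List V) := isPrefix_of_DmkPref_eq (z := z) hP (by omega)
  exact ⟨⟨Cmk_append_subset hC.le hsuf, DmkSuf_append_subset hk hsuf⟩,
    Cmk'_append_subset hm hw₁ hw₂ hC'.le hsuf hpre, DmkPref_append_subset hk hlong hpre⟩

end Append

lemma Emk_append_eq {w₁ w₂ : List V} (hm : 1 ≤ m) (hk : 1 ≤ k) (hw₁ : 2 * k ≤ w₁.length)
    (hw₂ : 2 * k ≤ w₂.length) (h : Emk bar m k w₁ = Emk bar m k w₂) (r : List V) :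
    Emk bar m k (w₁ ++ r) = Emk bar m k (w₂ ++ r) := by
  have hC : Cmk bar m k w₁ = Cmk bar m k w₂ := congrArg (·.1.1) h
  have hP : DmkPref m k w₁ = DmkPref m k w₂ := congrArg (·.2.2) h
  rcases lt_or_ge w₁.length (m + k) with hs₁ | hl₁
  · rw [eq_of_length_lt hC.ge hP (by omega) hs₁]
  rcases lt_or_ge w₂.length (m + k) with hs₂ | hl₂
  · rw [eq_of_length_lt hC.le hP.symm (by omega) hs₂]
  exact le_antisymm (Emk_append_le hm hk hw₁ hw₂ hl₁ h) (Emk_append_le hm hk hw₂ hw₁ hl₂ h.symm)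

end

variable {V : Type} [Fintype V]

theorem Emk_right_left_invariant_general (bar : V → V) (m k : ℕ) (hm : 1 ≤ m) (hk : 1 ≤ k)
    (w₁ w₂ : List V) (h₁ : 2 * k ≤ w₁.length) (h₂ : 2 * k ≤ w₂.length)
    (h : Emk bar m k w₁ = Emk bar m k w₂) :
    ∀ r l : List V, Emk bar m k (w₁ ++ r) = Emk bar m k (w₂ ++ r) ∧
      Emk bar m k (l ++ w₁) = Emk bar m k (l ++ w₂) := by
  intro r l
  refine ⟨Emk_append_eq hm hk h₁ h₂ h r, ?_⟩
  have hrev := Emk_append_eq hm hk (by simpa) (by simpa) (Emk_reverse_congr h) l.reverse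
  simpa using Emk_reverse_congr hrev

theorem Emk_right_left_invariant (bar : V → V) (hbar : ∀ a, bar (bar a) = a) (m k : ℕ) (hm : 1 ≤ m) (hk : 1 ≤ k)
    (w₁ w₂ : List V) (h₁ : 2 * k ≤ w₁.length) (h₂ : 2 * k ≤ w₂.length)
    (h : Emk bar m k w₁ = Emk bar m k w₂) :
    ∀ r l : List V, Emk bar m k (w₁ ++ r) = Emk bar m k (w₂ ++ r) ∧
      Emk bar m k (l ++ w₁) = Emk bar m k (l ++ w₂) :=
  Emk_right_left_invariant_general bar m k hm hk w₁ w₂ h₁ h₂ h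

end Hairpin
end
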